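/- arXiv:1506.04730 — 3 statements merged into one kernel-verified Lean document; each statement's English description precedes it below -/
import Mathlib

section
/- Curves x, x̂ : I → ℝⁿ form a Ribaucour pair with tangent cross ratio cr if and only if x' is parallel (as a vector in ℝⁿ) to (x̂−x)⁻¹ x̂' (x̂−x), i.e. the reflection of x̂' in the direction x̂−x is a positive or negative multiple of x'; in that case (x̂−x)⁻¹ x̂' (x̂−x) = cr·|x̂−x|²/|x'|² · x'. -/
noncomputable section
open CliffordAlgebra

/-- Euclidean n-space. -/
abbrev E (n : ℕ) := EuclideanSpace ℝ (Fin n)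

/-- The quadratic form of the standard inner product on ℝⁿ. -/
def QE (n : ℕ) : QuadraticForm ℝ (E n) := LinearMap.BilinMap.toQuadraticMap (innerₗ (E n))

/-- The Clifford-algebra inverse of a vector: v⁻¹ = v / |v|². -/
def cinv {n : ℕ} (v : E n) : CliffordAlgebra (QE n) := (QE n v)⁻¹ • ι (QE n) v

/-! Put v = x − x̂. Expanding v⁻¹ = v/|v|² gives cr = |v|⁻² · x'(v⁻¹ x̂' v), and
(−v)⁻¹ x̂' (−v) = v⁻¹ x̂' v. Since x'² = |x'|² is a nonzero real, left multiplication by x' is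
invertible and sends the real multiples of x' exactly onto the real scalars:
x' a = c ⟺ a = (c/|x'|²) x'. Hence cr = c if and only if v⁻¹ x̂' v = (c|v|²/|x'|²) x'. -/

theorem CliffordAlgebra.ι_mul_eq_algebraMap_iff {K V : Type*} [Field K] [AddCommGroup V]
    [Module K V] {Q : QuadraticForm K V} {u : V} (hu : Q u ≠ 0) (a : CliffordAlgebra Q)
    (c : K) : ι Q u * a = algebraMap K _ c ↔ a = (c / Q u) • ι Q u := by
  constructor
  · intro h
    have hQa : Q u • a = c • ι Q u := by
      rw [Algebra.smul_def, ← ι_sq_scalar, mul_assoc, h, ← Algebra.commutes, ← Algebra.smul_def]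
    rw [div_eq_inv_mul, mul_smul, ← hQa, inv_smul_smul₀ hu]
  · rintro rfl
    rw [mul_smul_comm, ι_sq_scalar, Algebra.smul_def, ← map_mul, div_mul_cancel₀ c hu]

theorem QE_ne_zero {n : ℕ} {v : E n} (hv : v ≠ 0) : QE n v ≠ 0 :=
  inner_self_eq_zero.not.mpr hv

theorem cinv_neg_mul_mul_ι_neg {n : ℕ} (v : E n) (a : CliffordAlgebra (QE n)) :
    cinv (-v) * a * ι (QE n) (-v) = cinv v * a * ι (QE n) v := by
  simp only [cinv, QuadraticMap.map_neg, map_neg, smul_neg, neg_mul, mul_neg, neg_neg]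

theorem ι_mul_cinv_mul_ι_mul_cinv {n : ℕ} (u v w : E n) :
    ι (QE n) u * cinv v * ι (QE n) w * cinv v
      = (QE n v)⁻¹ • (ι (QE n) u * (cinv v * ι (QE n) w * ι (QE n) v)) := by
  simp only [cinv, smul_mul_assoc, mul_smul_comm, mul_assoc]

theorem ribaucour_iff_reflection_parallel_general {n : ℕ} (x xh dx dxh : ℝ → E n)
    (hne : ∀ s, x s ≠ xh s) (himm : ∀ s, dx s ≠ 0) :
    ∀ s,
      ((∃ c : ℝ, ι (QE n) (dx s) * cinv (x s - xh s) * ι (QE n) (dxh s) * cinv (x s - xh s)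
          = algebraMap ℝ _ c)
        ↔ (∃ r : ℝ, cinv (xh s - x s) * ι (QE n) (dxh s) * ι (QE n) (xh s - x s)
             = r • ι (QE n) (dx s)))
      ∧ (∀ c : ℝ,
          ι (QE n) (dx s) * cinv (x s - xh s) * ι (QE n) (dxh s) * cinv (x s - xh s)
            = algebraMap ℝ _ c →
          cinv (xh s - x s) * ι (QE n) (dxh s) * ι (QE n) (xh s - x s)
            = (c * QE n (xh s - x s) / QE n (dx s)) • ι (QE n) (dx s)) := by
  intro s
  have hv : QE n (x s - xh s) ≠ 0 := QE_ne_zero (sub_ne_zero.mpr (hne s))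
  have hu : QE n (dx s) ≠ 0 := QE_ne_zero (himm s)
  have cr_eq_iff (c : ℝ) :
      ι (QE n) (dx s) * cinv (x s - xh s) * ι (QE n) (dxh s) * cinv (x s - xh s)
          = algebraMap ℝ _ c ↔
        cinv (x s - xh s) * ι (QE n) (dxh s) * ι (QE n) (x s - xh s)
          = (c * QE n (x s - xh s) / QE n (dx s)) • ι (QE n) (dx s) := by
    rw [ι_mul_cinv_mul_ι_mul_cinv, inv_smul_eq_iff₀ hv, Algebra.smul_def, ← map_mul, mul_comm,
      ι_mul_eq_algebraMap_iff hu]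
  rw [← neg_sub (x s) (xh s), cinv_neg_mul_mul_ι_neg, QuadraticMap.map_neg]
  simp only [cr_eq_iff]
  refine ⟨⟨fun ⟨c, hc⟩ => ⟨_, hc⟩, fun ⟨r, hr⟩ => ⟨r * QE n (dx s) / QE n (x s - xh s), ?_⟩⟩,
    fun _ => id⟩
  rwa [div_mul_cancel₀ _ hv, mul_div_cancel_right₀ _ hu]

/-- the Ribaucour condition (real tangent cross ratio) holds iff the
reflection of x̂' in the direction x̂−x is parallel to x', and then
(x̂−x)⁻¹x̂'(x̂−x) = (cr·|x̂−x|²/|x'|²)·x'. -/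
theorem ribaucour_iff_reflection_parallel {n : ℕ} (x xh dx dxh : ℝ → E n)
    (hx : ∀ s, HasDerivAt x (dx s) s) (hxh : ∀ s, HasDerivAt xh (dxh s) s)
    (hne : ∀ s, x s ≠ xh s) (himm : ∀ s, dx s ≠ 0) (himm' : ∀ s, dxh s ≠ 0) :
    ∀ s,
      ((∃ c : ℝ, ι (QE n) (dx s) * cinv (x s - xh s) * ι (QE n) (dxh s) * cinv (x s - xh s)
          = algebraMap ℝ _ c)
        ↔ (∃ r : ℝ, cinv (xh s - x s) * ι (QE n) (dxh s) * ι (QE n) (xh s - x s)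
             = r • ι (QE n) (dx s)))
      ∧ (∀ c : ℝ,
          ι (QE n) (dx s) * cinv (x s - xh s) * ι (QE n) (dxh s) * cinv (x s - xh s)
            = algebraMap ℝ _ c →
          cinv (xh s - x s) * ι (QE n) (dxh s) * ι (QE n) (xh s - x s)
            = (c * QE n (xh s - x s) / QE n (dx s)) • ι (QE n) (dx s)) :=
  ribaucour_iff_reflection_parallel_general x xh dx dxh hne himm
end
end

section
/- Tractrix construction: let y : I → ℝⁿ be an arc-length parametrized smooth curve with |y'| ≡ 1, and μ > 0. Then the curves x± := y ± (1/(2√μ)) y' form a Darboux pair with respect to their common arc-length polarization: |x₊'| = |x₋'|, and x₊'(x₊−x₋)⁻¹x₋'(x₊−x₋)⁻¹ = μ·|x₊'|², i.e. cr ds² = μ |x±' ds|². -/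
noncomputable section
open CliffordAlgebra

open scoped RealInnerProductSpace

lemma QE_apply {n : ℕ} (v : E n) : QE n v = ⟪v, v⟫ := rfl

lemma QE_polar {n : ℕ} (a b : E n) : QuadraticMap.polar (QE n) a b = 2 * ⟪a, b⟫ := by
  rw [QE, LinearMap.BilinMap.polar_toQuadraticMap]
  simp only [innerₗ_apply_apply]
  rw [real_inner_comm b a]; ring

lemma clifford_key {A : Type*} [Ring A] [Algebra ℝ A] (a b : A) (c q : ℝ)
    (haa : a * a = 1) (hbb : b * b = algebraMap ℝ A q) (hab : a * b + b * a = 0) :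
    ((a + c • b) * a) * (a - c • b) * a = algebraMap ℝ A (1 + c * c * q) := by
  have hba : b * a = -(a * b) := eq_neg_of_add_eq_zero_right hab
  have h1 : (a + c • b) * a = 1 + c • (b * a) := by
    rw [add_mul, haa, smul_mul_assoc]
  have h2 : (1 + c • (b * a)) * (a - c • b) = a - (c * c) • (b * a * b) := by
    rw [add_mul, one_mul, smul_mul_assoc, mul_sub, mul_assoc b a a, haa, mul_one,
      mul_smul_comm, smul_sub, smul_smul]
    abel
  have h3 : b * a * b = -(algebraMap ℝ A q * a) := by
    rw [hba, neg_mul, mul_assoc, hbb, ← Algebra.commutes]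
  have h4 : (a - (c * c) • (b * a * b)) * a = 1 + (c * c) • (algebraMap ℝ A q) := by
    rw [sub_mul, haa, smul_mul_assoc, h3, neg_mul, mul_assoc, haa, mul_one, smul_neg,
      sub_neg_eq_add]
  rw [h1, h2, h4, Algebra.smul_def, ← map_mul, ← map_one (algebraMap ℝ A), ← map_add]

/-- tractrix construction — x± = y ± y'/(2√μ) form a Darboux pair with
respect to their common arc-length polarization: |x₊'| = |x₋'| and the tangent
cross ratio of (x₊,x₋) equals μ·|x₊'|². -/
theorem tractrix_darboux_pair {n : ℕ} (y dy : ℝ → E n) (μ : ℝ) (hμ : 0 < μ)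
    (hy : ∀ s, HasDerivAt y (dy s) s) (harc : ∀ s, QE n (dy s) = 1)
    (xp xm : ℝ → E n) (dxp dxm : ℝ → E n)
    (hxp : ∀ s, xp s = y s + (1 / (2 * Real.sqrt μ)) • dy s)
    (hxm : ∀ s, xm s = y s - (1 / (2 * Real.sqrt μ)) • dy s)
    (hdxp : ∀ s, HasDerivAt xp (dxp s) s) (hdxm : ∀ s, HasDerivAt xm (dxm s) s)
    (himm : ∀ s, dxp s ≠ 0) (himm' : ∀ s, dxm s ≠ 0) :
    ∀ s, QE n (dxp s) = QE n (dxm s)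
      ∧ ι (QE n) (dxp s) * cinv (xp s - xm s) * ι (QE n) (dxm s) * cinv (xp s - xm s)
          = algebraMap ℝ _ (μ * QE n (dxp s)) := by
  intro s
  set sμ := Real.sqrt μ with hsμdef
  have hsμ0 : 0 < sμ := Real.sqrt_pos.mpr hμ
  have hsμsq : sμ * sμ = μ := Real.mul_self_sqrt hμ.le
  set c : ℝ := 1 / (2 * sμ) with hcdef
  have hc0 : c ≠ 0 := by positivity
  -- dy is differentiable at s with derivative ddy
  obtain ⟨ddy, hddydef⟩ : ∃ d : E n, d = c⁻¹ • (dxp s - dy s) := ⟨_, rfl⟩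
  have hdyfun : dy = fun u => c⁻¹ • (xp u - y u) := by
    funext u
    rw [hxp u]
    rw [show y u + c • dy u - y u = c • dy u by abel, smul_smul, inv_mul_cancel₀ hc0, one_smul]
  have hdy : HasDerivAt dy ddy s := by
    rw [hdyfun, hddydef]
    exact ((hdxp s).sub (hy s)).const_smul c⁻¹
  -- express dxp, dxm
  have hdxps : dxp s = dy s + c • ddy := by
    rw [hddydef, smul_smul, mul_inv_cancel₀ hc0, one_smul]; abel
  have hdxms : dxm s = dy s - c • ddy := by
    have hxmfun : xm = fun u => (2 : ℝ) • y u - xp u := by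
      funext u; rw [hxm u, hxp u]
      rw [two_smul]; abel
    have h2 : HasDerivAt xm ((2 : ℝ) • dy s - dxp s) s := by
      rw [hxmfun]; exact ((hy s).const_smul (2 : ℝ)).sub (hdxp s)
    have := (hdxm s).unique h2
    rw [this, hdxps, two_smul]; abel
  -- orthogonality
  have horth : ⟪dy s, ddy⟫ = 0 := by
    have hconst : HasDerivAt (fun t => ⟪dy t, dy t⟫) 0 s := by
      have : (fun t => ⟪dy t, dy t⟫) = fun _ => (1 : ℝ) := by
        funext t; rw [← QE_apply, harc t]
      rw [this]; exact hasDerivAt_const s 1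
    have hder : HasDerivAt (fun t => ⟪dy t, dy t⟫) (⟪dy s, ddy⟫ + ⟪ddy, dy s⟫) s :=
      hdy.inner ℝ hdy
    have h0 := hconst.unique hder
    have hsymm := real_inner_comm ddy (dy s)
    linarith
  have hdy1 : ⟪dy s, dy s⟫ = 1 := by rw [← QE_apply]; exact harc s
  -- quadratic values
  have hQp : QE n (dxp s) = 1 + c * c * ⟪ddy, ddy⟫ := by
    rw [hdxps, QE_apply, real_inner_add_add_self]
    simp only [real_inner_smul_left, real_inner_smul_right]
    rw [hdy1, horth]; ring
  have hQm : QE n (dxm s) = 1 + c * c * ⟪ddy, ddy⟫ := by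
    rw [hdxms, QE_apply, real_inner_sub_sub_self]
    simp only [real_inner_smul_left, real_inner_smul_right]
    rw [hdy1, horth]; ring
  refine ⟨hQp.trans hQm.symm, ?_⟩
  -- the difference vector
  have hvs : xp s - xm s = (2 * c) • dy s := by
    rw [hxp s, hxm s, two_mul, add_smul]; abel
  have h2c : 2 * c = sμ⁻¹ := by
    rw [hcdef]; field_simp
  have hQv : QE n (xp s - xm s) = μ⁻¹ := by
    rw [hvs, QE_apply, real_inner_smul_left, real_inner_smul_right, hdy1, h2c, ← hsμsq]
    field_simp
  have hμsμ : μ * sμ⁻¹ = sμ := by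
    rw [← hsμsq, mul_assoc, mul_inv_cancel₀ hsμ0.ne', mul_one]
  have hcinv : cinv (xp s - xm s) = sμ • ι (QE n) (dy s) := by
    simp only [cinv]
    rw [hQv, inv_inv, hvs, map_smul, smul_smul, h2c, hμsμ]
  -- Clifford relations
  set a : CliffordAlgebra (QE n) := ι (QE n) (dy s) with hadef
  set b : CliffordAlgebra (QE n) := ι (QE n) ddy with hbdef
  have haa : a * a = 1 := by rw [hadef, ι_sq_scalar, harc s, map_one]
  have hbb : b * b = algebraMap ℝ _ (⟪ddy, ddy⟫) := by
    rw [hbdef, ι_sq_scalar, QE_apply]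
  have hab : a * b + b * a = 0 := by
    rw [hadef, hbdef, ι_mul_ι_add_swap, QE_polar, horth, mul_zero, map_zero]
  have hιp : ι (QE n) (dxp s) = a + c • b := by
    rw [hdxps, map_add, map_smul]
  have hιm : ι (QE n) (dxm s) = a - c • b := by
    rw [hdxms, map_sub, map_smul]
  rw [hιp, hιm, hcinv]
  have hre : (a + c • b) * (sμ • a) * ((a - c • b)) * (sμ • a)
      = (sμ * sμ) • (((a + c • b) * a) * (a - c • b) * a) := by
    simp only [smul_mul_assoc, mul_smul_comm, smul_smul]
  rw [hre, clifford_key a b c (⟪ddy, ddy⟫) haa hbb hab, hsμsq, Algebra.smul_def, ← map_mul, hQp]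
end
end

section
/- Christoffel–Darboux permutability: let x : (I, ds²/m) → ℝⁿ have Christoffel dual x* (so (x*)' = 1/(m x') as Clifford inverses) and Darboux transform x̂ satisfying the Riccati equation x̂' = μ(x̂−x)(x*)'(x̂−x). Then x̂* := x* + 1/(μ(x̂−x)) satisfies (x̂*)' = 1/(m x̂') (i.e. x̂* is Christoffel dual to x̂) and (x̂*)' = μ(x̂*−x*) x' (x̂*−x*) (i.e. x̂* is a μ-Darboux transform of x*). -/
/-!
In the Clifford algebra a vector v ≠ 0 is invertible with v⁻¹ = v/|v|², and with v = x̂ − x,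
a = x' the Riccati equation says x̂' = μ v (x*)' v. Differentiating x̂* = x* + μ⁻¹ v⁻¹ gives
(x̂*)' = (x*)' − μ⁻¹ v⁻¹ (x̂' − x') v⁻¹ = μ⁻¹ v⁻¹ a v⁻¹, and this is also 1/(m x̂') and
μ (x̂* − x*) a (x̂* − x*). Since v a v = 2⟨v, a⟩ v − |v|² a, every quantity involved is a vector
in the span of v and a, so the identities reduce to comparing two real coefficients.
-/

noncomputable section
open CliffordAlgebra

open scoped RealInnerProductSpace

theorem CliffordAlgebra.ι_injective {R M : Type*} [CommRing R] [Invertible (2 : R)]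
    [AddCommGroup M] [Module R M] (Q : QuadraticForm R M) : Function.Injective (ι Q) := by
  intro a b h
  simpa [equivExterior, changeForm_ι] using congrArg (equivExterior Q) h

theorem HasDerivAt.inner_self_inv_smul {F : Type*} [NormedAddCommGroup F]
    [InnerProductSpace ℝ F] {f : ℝ → F} {f' : F} {t : ℝ} (hf : HasDerivAt f f' t)
    (h0 : f t ≠ 0) :
    HasDerivAt (fun s => ⟪f s, f s⟫⁻¹ • f s)
      (⟪f t, f t⟫⁻¹ • f' - (2 * ⟪f t, f'⟫ / ⟪f t, f t⟫ ^ 2) • f t) t := by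
  have hq : ⟪f t, f t⟫ ≠ 0 := inner_self_ne_zero.mpr h0
  convert ((hf.inner ℝ hf).inv hq).smul hf using 1
  · rfl
  · rw [real_inner_comm f' (f t), sub_eq_add_neg, ← neg_smul, neg_div, ← two_mul]
    rfl

def sandwich {F : Type*} [NormedAddCommGroup F] [InnerProductSpace ℝ F] (v a : F) : F :=
  (2 * ⟪v, a⟫) • v - ⟪v, v⟫ • a

theorem inner_self_sandwich {F : Type*} [NormedAddCommGroup F] [InnerProductSpace ℝ F]
    (v a : F) : ⟪sandwich v a, sandwich v a⟫ = ⟪v, v⟫ ^ 2 * ⟪a, a⟫ := by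
  simp only [sandwich, inner_sub_left, inner_sub_right, real_inner_smul_left,
    real_inner_smul_right, real_inner_comm v a]
  ring

namespace QE

variable {n : ℕ}

theorem apply (v : E n) : QE n v = ⟪v, v⟫ := rfl

theorem polar (a b : E n) : QuadraticMap.polar (QE n) a b = 2 * ⟪a, b⟫ := by
  rw [QE, LinearMap.BilinMap.polar_toQuadraticMap]
  change ⟪a, b⟫ + ⟪b, a⟫ = _
  rw [real_inner_comm b a, two_mul]

theorem ι_mul_ι_mul_ι (v a : E n) :
    ι (QE n) v * ι (QE n) a * ι (QE n) v = ι (QE n) (sandwich v a) := by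
  rw [CliffordAlgebra.ι_mul_ι_mul_ι, polar, apply, sandwich]

end QE

section Pointwise

variable {n : ℕ} {v a w : E n} {m μ : ℝ}

theorem eq_smul_sandwich_of_riccati
    (h : ι (QE n) w = μ • (ι (QE n) v * ι (QE n) ((m * QE n a)⁻¹ • a) * ι (QE n) v)) :
    w = (μ * (m * ⟪a, a⟫)⁻¹) • sandwich v a := by
  apply ι_injective (QE n)
  rw [h, map_smul, mul_smul_comm, smul_mul_assoc, QE.ι_mul_ι_mul_ι, ← map_smul,
    ← map_smul, smul_smul, QE.apply]

theorem christoffel_dual_smul_sandwich (hμ : μ ≠ 0) (hm : m ≠ 0) (hv : ⟪v, v⟫ ≠ 0)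
    (ha : ⟪a, a⟫ ≠ 0) (hw : w = (μ * (m * ⟪a, a⟫)⁻¹) • sandwich v a) :
    (m * QE n w)⁻¹ • w = (μ * ⟪v, v⟫ ^ 2)⁻¹ • sandwich v a := by
  rw [QE.apply, hw, real_inner_smul_left, real_inner_smul_right, inner_self_sandwich, smul_smul]
  congr 1
  field_simp

theorem christoffel_dual_add_inv_deriv (hμ : μ ≠ 0) (hm : m ≠ 0) (hv : ⟪v, v⟫ ≠ 0)
    (ha : ⟪a, a⟫ ≠ 0) (hw : w = (μ * (m * ⟪a, a⟫)⁻¹) • sandwich v a) :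
    (m * ⟪a, a⟫)⁻¹ • a + μ⁻¹ • (⟪v, v⟫⁻¹ • (w - a) - (2 * ⟪v, w - a⟫ / ⟪v, v⟫ ^ 2) • v)
      = (μ * ⟪v, v⟫ ^ 2)⁻¹ • sandwich v a := by
  subst hw
  simp only [sandwich, inner_sub_right, real_inner_smul_right, smul_sub, smul_smul]
  match_scalars <;> field_simp <;> ring

theorem smul_ι_inv_mul_ι_mul_ι_inv (hμ : μ ≠ 0) (hv : ⟪v, v⟫ ≠ 0) :
    μ • (ι (QE n) ((μ * ⟪v, v⟫)⁻¹ • v) * ι (QE n) a * ι (QE n) ((μ * ⟪v, v⟫)⁻¹ • v))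
      = ι (QE n) ((μ * ⟪v, v⟫ ^ 2)⁻¹ • sandwich v a) := by
  rw [QE.ι_mul_ι_mul_ι, ← map_smul]
  congr 1
  simp only [sandwich, real_inner_smul_left, real_inner_smul_right, smul_sub, smul_smul]
  match_scalars <;> field_simp

end Pointwise

theorem christoffel_darboux_permutability_general {n : ℕ}
    (x xstar xh : ℝ → E n) (dx dxstar dxh : ℝ → E n)
    (m : ℝ → ℝ) (μ : ℝ) (hμ : μ ≠ 0) (hm : ∀ s, m s ≠ 0)
    (hx : ∀ s, HasDerivAt x (dx s) s)
    (hxstar : ∀ s, HasDerivAt xstar (dxstar s) s)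
    (hxh : ∀ s, HasDerivAt xh (dxh s) s)
    (hne : ∀ s, xh s ≠ x s) (himm : ∀ s, dx s ≠ 0)
    -- Christoffel duality: (x*)' = 1/(m x'), i.e. (x*)' = x'/(m·|x'|²)
    (hdual : ∀ s, dxstar s = (m s * QE n (dx s))⁻¹ • dx s)
    -- Riccati equation: x̂' = μ(x̂−x)(x*)'(x̂−x)
    (hricc : ∀ s, ι (QE n) (dxh s)
      = μ • (ι (QE n) (xh s - x s) * ι (QE n) (dxstar s) * ι (QE n) (xh s - x s)))
    (xhstar : ℝ → E n)
    (hdef : ∀ s, xhstar s = xstar s + (μ * QE n (xh s - x s))⁻¹ • (xh s - x s)) :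
    ∀ s,
      HasDerivAt xhstar ((m s * QE n (dxh s))⁻¹ • dxh s) s
      ∧ ι (QE n) ((m s * QE n (dxh s))⁻¹ • dxh s)
          = μ • (ι (QE n) (xhstar s - xstar s) * ι (QE n) (dx s)
              * ι (QE n) (xhstar s - xstar s)) := by
  intro s
  have hv : xh s - x s ≠ 0 := sub_ne_zero.mpr (hne s)
  have hv₀ : ⟪xh s - x s, xh s - x s⟫ ≠ 0 := inner_self_ne_zero.mpr hv
  have ha₀ : ⟪dx s, dx s⟫ ≠ 0 := inner_self_ne_zero.mpr (himm s)
  have hxh' := eq_smul_sandwich_of_riccati (hdual s ▸ hricc s)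
  have hgap : xhstar s - xstar s = (μ * ⟪xh s - x s, xh s - x s⟫)⁻¹ • (xh s - x s) := by
    rw [hdef s, QE.apply, add_sub_cancel_left]
  rw [christoffel_dual_smul_sandwich hμ (hm s) hv₀ ha₀ hxh']
  refine ⟨?_, by rw [hgap, smul_ι_inv_mul_ι_mul_ι_inv hμ hv₀]⟩
  have hxhstar :
      xhstar = fun t => xstar t + μ⁻¹ • (⟪xh t - x t, xh t - x t⟫⁻¹ • (xh t - x t)) := by
    funext t
    rw [hdef t, QE.apply, mul_inv, mul_smul]
  rw [← christoffel_dual_add_inv_deriv hμ (hm s) hv₀ ha₀ hxh', hxhstar, ← QE.apply, ← hdual s]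
  exact (hxstar s).add ((((hxh s).sub (hx s)).inner_self_inv_smul hv).const_smul μ⁻¹)

/-- Christoffel–Darboux permutability. If x* is Christoffel dual to x
((x*)' = 1/(m x')) and x̂ is a μ-Darboux transform of x (Riccati equation), then
x̂* := x* + 1/(μ(x̂−x)) is Christoffel dual to x̂ and a μ-Darboux transform of x*. -/
theorem christoffel_darboux_permutability {n : ℕ}
    (x xstar xh : ℝ → E n) (dx dxstar dxh : ℝ → E n)
    (m : ℝ → ℝ) (μ : ℝ) (hμ : μ ≠ 0) (hm : ∀ s, m s ≠ 0)
    (hx : ∀ s, HasDerivAt x (dx s) s)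
    (hxstar : ∀ s, HasDerivAt xstar (dxstar s) s)
    (hxh : ∀ s, HasDerivAt xh (dxh s) s)
    (hne : ∀ s, xh s ≠ x s) (himm : ∀ s, dx s ≠ 0) (himm' : ∀ s, dxh s ≠ 0)
    -- Christoffel duality: (x*)' = 1/(m x'), i.e. (x*)' = x'/(m·|x'|²)
    (hdual : ∀ s, dxstar s = (m s * QE n (dx s))⁻¹ • dx s)
    -- Riccati equation: x̂' = μ(x̂−x)(x*)'(x̂−x)
    (hricc : ∀ s, ι (QE n) (dxh s)
      = μ • (ι (QE n) (xh s - x s) * ι (QE n) (dxstar s) * ι (QE n) (xh s - x s)))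
    (xhstar : ℝ → E n)
    (hdef : ∀ s, xhstar s = xstar s + (μ * QE n (xh s - x s))⁻¹ • (xh s - x s)) :
    ∀ s,
      HasDerivAt xhstar ((m s * QE n (dxh s))⁻¹ • dxh s) s
      ∧ ι (QE n) ((m s * QE n (dxh s))⁻¹ • dxh s)
          = μ • (ι (QE n) (xhstar s - xstar s) * ι (QE n) (dx s)
              * ι (QE n) (xhstar s - xstar s)) :=
  christoffel_darboux_permutability_general x xstar xh dx dxstar dxh m μ hμ hm hx hxstar hxh hne
    himm hdual hricc xhstar hdef
end
end
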